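/- Let Z be a locally Noetherian scheme with a 1-canonical module ω, M a coherent sheaf on Z, and (−)^∨ = Hom_{O_Z}(−, ω). If M is isomorphic to a submodule of a finite direct sum of copies of ω, then M satisfies (S'_1) and Supp M ⊆ Supp ω. Moreover, for any coherent N, the dual N^∨ embeds (affine-locally) into a finite direct sum of copies of ω. -/

import Mathlib

open CategoryTheory

/-- Depth via local cohomology at the maximal ideal (following the paper). -/
noncomputable def localDepth (A : Type) [CommRing A] [IsLocalRing A]
    (M : Type) [AddCommGroup M] [Module A M] : ℕ∞ :=
  sInf {n : ℕ∞ | ∃ m : ℕ, n = (m : ℕ∞) ∧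
    Nontrivial ((localCohomology (IsLocalRing.maximalIdeal A) m).obj (ModuleCat.of A M))}

/-- `depth_{A_P} M_P` for a prime `P`. -/
noncomputable def primeLocalDepth (A : Type) [CommRing A] (P : Ideal A)
    (hP : P.IsPrime) (M : Type) [AddCommGroup M] [Module A M] : ℕ∞ :=
  haveI := hP
  localDepth (Localization.AtPrime P) (LocalizedModule P.primeCompl M)

/-- `dim A_P`, the height of the prime `P`. -/
noncomputable def primeKrullDim (A : Type) [CommRing A] (P : Ideal A)
    (hP : P.IsPrime) : WithBot ℕ∞ :=
  haveI := hP
  ringKrullDim (Localization.AtPrime P)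

/-- `dim M_P`, the dimension of the localized module. -/
noncomputable def primeModuleDim (A : Type) [CommRing A] (P : Ideal A)
    (hP : P.IsPrime) (M : Type) [AddCommGroup M] [Module A M] : WithBot ℕ∞ :=
  haveI := hP
  Order.krullDim
    (Module.support (Localization.AtPrime P) (LocalizedModule P.primeCompl M))

/-- Serre's condition `(S_n)`: `depth M_P ≥ min (n, dim M_P)` for all primes `P`. -/
def SerreS (A : Type) [CommRing A] (M : Type) [AddCommGroup M] [Module A M]
    (n : ℕ) : Prop :=
  ∀ (P : Ideal A) (hP : P.IsPrime),
    min (n : WithBot ℕ∞) (primeModuleDim A P hP M) ≤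
      (primeLocalDepth A P hP M : WithBot ℕ∞)

/-- Serre's condition `(S'_n)`: `depth M_P ≥ min (n, dim A_P)` for all primes `P`. -/
def SerreS' (A : Type) [CommRing A] (M : Type) [AddCommGroup M] [Module A M]
    (n : ℕ) : Prop :=
  ∀ (P : Ideal A) (hP : P.IsPrime),
    min (n : WithBot ℕ∞) (primeKrullDim A P hP) ≤
      (primeLocalDepth A P hP M : WithBot ℕ∞)

/-- `E` is an injective hull of the residue field of the local ring `A`:
an injective module containing the residue field as an essential submodule. -/
def IsInjectiveHullOfResidueField (A : Type) [CommRing A] [IsLocalRing A]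
    (E : Type) [AddCommGroup E] [Module A E] : Prop :=
  Module.Injective A E ∧
    ∃ f : IsLocalRing.ResidueField A →ₗ[A] E, Function.Injective f ∧
      ∀ N : Submodule A E, N ≠ ⊥ → N ⊓ LinearMap.range f ≠ ⊥

/-- Aoyama's definition: a finite module `K` over a Noetherian local ring `A`
of dimension `d` is a canonical module if `K ⊗_A Â ≅ Hom_A(H^d_m(A), E)`,
where `E` is an injective hull of the residue field. -/
def IsCanonicalModuleLocal (A : Type) [CommRing A] [IsLocalRing A]
    (K : Type) [AddCommGroup K] [Module A K] : Prop :=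
  Module.Finite A K ∧
  ∃ (E : Type) (_ : AddCommGroup E) (_ : Module A E),
    IsInjectiveHullOfResidueField A E ∧
    Nonempty
      ((TensorProduct A K (AdicCompletion (IsLocalRing.maximalIdeal A) A)) ≃ₗ[A]
        (((localCohomology (IsLocalRing.maximalIdeal A)
            (WithTop.untopD 0 (WithBot.unbotD 0 (ringKrullDim A)))).obj (ModuleCat.of A A)) →ₗ[A] E))

/-- At the prime `P`, the localization `ω_P` is either zero or a canonical
module of the local ring `B_P`. -/
def ZeroOrCanonicalAt (B : Type) [CommRing B] (P : Ideal B) (hP : P.IsPrime)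
    (ω : Type) [AddCommGroup ω] [Module B ω] : Prop :=
  haveI := hP
  Subsingleton (LocalizedModule P.primeCompl ω) ∨
    IsCanonicalModuleLocal (Localization.AtPrime P) (LocalizedModule P.primeCompl ω)

/-- A finite module `ω` over a Noetherian ring `B` is `n`-canonical if it
satisfies `(S'_n)` and is zero or canonical at every prime of height `< n`. -/
def IsNCanonicalModule (B : Type) [CommRing B]
    (ω : Type) [AddCommGroup ω] [Module B ω] (n : ℕ) : Prop :=
  Module.Finite B ω ∧ SerreS' B ω n ∧
    ∀ (P : Ideal B) (hP : P.IsPrime),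
      primeKrullDim B P hP < (n : WithBot ℕ∞) → ZeroOrCanonicalAt B P hP ω

/-! A module over a local ring has depth `≥ 1` iff `H⁰_m` vanishes, and since `H⁰_m(M)` is the
colimit of `Hom(A/mᵗ, M)`, iff no map `A/mᵗ → M` is nonzero. This condition passes from `ω` to any
submodule of `ωʳ`, and localization preserves such embeddings, so `(S'₁)` passes from `ω` to `M`;
likewise `Supp M ⊆ Supp ωʳ = Supp ω`. Finally `Hom(N, ω)` embeds into `ωⁿ` by evaluation at
`n` generators of `N`. -/

open Limits localCohomology

section ExtZero

variable {R : Type*} [Ring R] {C : Type*} [Category* C] [Abelian C] [Linear R C]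
  [EnoughProjectives C]

noncomputable def extZeroIsoLinearYoneda (Y : C)
    [PreservesFiniteLimits ((linearYoneda R C).obj Y)] :
    (Ext R C 0).flip.obj Y ≅ (linearYoneda R C).obj Y :=
  haveI := preservesFiniteColimits_rightOp ((linearYoneda R C).obj Y)
  NatIso.ofComponents
    (fun X => (((linearYoneda R C).obj Y).rightOp.leftDerivedZeroIsoSelf.app X.unop).unop.symm)
    (fun f => Quiver.Hom.op_inj
      (((linearYoneda R C).obj Y).rightOp.leftDerivedZeroIsoSelf.inv.naturality f.unop).symm)

end ExtZero

section LocalCohomologyZero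

universe u

variable {R : Type u} [CommRing R]

-- The composite with `forget` is `yoneda.obj M`, and `forget` reflects limits.
instance (M : ModuleCat.{u} R) : PreservesLimits ((linearYoneda R (ModuleCat.{u} R)).obj M) :=
  haveI : PreservesLimits ((linearYoneda R (ModuleCat R)).obj M ⋙ forget (ModuleCat R)) :=
    inferInstanceAs (PreservesLimits (yoneda.obj M))
  preservesLimits_of_reflects_of_preserves _ (forget _)

variable {D : Type*} [SmallCategory D]

noncomputable abbrev ringModIdealsHom (I : D ⥤ Ideal R) (M : ModuleCat.{u} R) :
    Dᵒᵖ ⥤ ModuleCat.{u} R :=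
  (ringModIdeals I).op ⋙ (linearYoneda R (ModuleCat R)).obj M

noncomputable def localCohomologyZeroIso (J : Ideal R) (M : ModuleCat.{u} R) :
    (localCohomology J 0).obj M ≅ colimit (ringModIdealsHom (idealPowersDiagram J) M) :=
  haveI := hasColimitDiagram.{u, 0} (idealPowersDiagram J) 0
  colimitObjIsoColimitCompEvaluation _ M ≪≫
    HasColimit.isoOfNatIso (Functor.isoWhiskerLeft _ (extZeroIsoLinearYoneda M))

noncomputable def ringModIdealsHomEvalOne (I : D ⥤ Ideal R) (M : ModuleCat.{u} R) :
    Cocone (ringModIdealsHom I M) where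
  pt := M
  ι :=
    { app := fun d => ModuleCat.ofHom
        (LinearMap.applyₗ (1 : R ⧸ I.obj d.unop) ∘ₗ ModuleCat.homLinearEquiv.toLinearMap)
      naturality := fun _ _ _ => by
        ext φ
        -- the transition maps `R ⧸ I d' → R ⧸ I d` send `1` to `1`
        exact congrArg φ.hom rfl }

theorem isZero_colimit_ringModIdealsHom_iff (I : D ⥤ Ideal R) (M : ModuleCat.{u} R)
    [HasColimit (ringModIdealsHom I M)] :
    IsZero (colimit (ringModIdealsHom I M)) ↔
      ∀ (d : D) (f : R ⧸ I.obj d →ₗ[R] M), f = 0 := by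
  constructor
  · intro h d f
    rw [ModuleCat.isZero_iff_subsingleton] at h
    refine Submodule.linearMap_qext _ (LinearMap.ext_ring ?_)
    let x : (ringModIdealsHom I M).obj (Opposite.op d) := ModuleCat.ofHom f
    have hx : colimit.ι (ringModIdealsHom I M) (Opposite.op d) x = 0 := Subsingleton.elim _ _
    have := congrArg (colimit.desc _ (ringModIdealsHomEvalOne I M)) hx
    rwa [← ConcreteCategory.comp_apply, colimit.ι_desc, map_zero] at this
  · intro h
    rw [IsZero.iff_id_eq_zero]
    refine colimit.hom_ext fun d => IsZero.eq_of_src ?_ _ _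
    rw [ModuleCat.isZero_iff_subsingleton]
    exact ⟨fun φ ψ => ModuleCat.hom_ext ((h _ φ.hom).trans (h _ ψ.hom).symm)⟩

theorem isZero_localCohomology_zero_iff (J : Ideal R) (M : ModuleCat.{u} R) :
    IsZero ((localCohomology J 0).obj M) ↔ ∀ (t : ℕ) (f : R ⧸ J ^ t →ₗ[R] M), f = 0 := by
  rw [Iso.isZero_iff (localCohomologyZeroIso J M), isZero_colimit_ringModIdealsHom_iff]
  exact ⟨fun h t => h (Opposite.op t), fun h t => h t.unop⟩

end LocalCohomologyZero

theorem one_le_localDepth_iff (A : Type) [CommRing A] [IsLocalRing A]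
    (M : Type) [AddCommGroup M] [Module A M] :
    1 ≤ localDepth A M ↔
      ∀ (t : ℕ) (f : A ⧸ IsLocalRing.maximalIdeal A ^ t →ₗ[A] M), f = 0 := by
  rw [← isZero_localCohomology_zero_iff (M := ModuleCat.of A M),
    ModuleCat.isZero_iff_subsingleton, ← not_nontrivial_iff_subsingleton]
  simp only [localDepth, le_sInf_iff, Set.mem_ofPred_eq, forall_exists_index, and_imp]
  constructor
  · intro h hnt
    simpa using h 0 0 rfl hnt
  · rintro h _ (_ | m) rfl hnt
    · exact absurd hnt h
    · exact_mod_cast Nat.succ_pos m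

theorem LinearMap.eq_zero_of_injective_pi {R Q M N ι : Type*} [Semiring R] [AddCommMonoid Q]
    [AddCommMonoid M] [AddCommMonoid N] [Module R Q] [Module R M] [Module R N]
    {f : M →ₗ[R] ι → N} (hf : Function.Injective f) (hN : ∀ g : Q →ₗ[R] N, g = 0)
    (g : Q →ₗ[R] M) : g = 0 := by
  ext q
  refine hf (funext fun i => ?_)
  simpa using LinearMap.congr_fun (hN (LinearMap.proj i ∘ₗ f ∘ₗ g)) q

theorem one_le_localDepth_of_injective_pi {A M ω ι : Type} [CommRing A] [IsLocalRing A]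
    [AddCommGroup M] [Module A M] [AddCommGroup ω] [Module A ω]
    {f : M →ₗ[A] ι → ω} (hf : Function.Injective f) (hω : 1 ≤ localDepth A ω) :
    1 ≤ localDepth A M := by
  rw [one_le_localDepth_iff] at hω ⊢
  exact fun t => LinearMap.eq_zero_of_injective_pi hf (hω t)

theorem LocalizedModule.exists_injective_pi {R M N ι : Type*} [CommRing R] [AddCommGroup M]
    [AddCommGroup N] [Module R M] [Module R N] [Finite ι] (S : Submonoid R)
    {f : M →ₗ[R] ι → N} (hf : Function.Injective f) :
    ∃ g : LocalizedModule S M →ₗ[Localization S] (ι → LocalizedModule S N),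
      Function.Injective g :=
  ⟨(IsLocalizedModule.map S (LocalizedModule.mkLinearMap S M)
      (.pi fun i => LocalizedModule.mkLinearMap S N ∘ₗ .proj i) f).extendScalarsOfIsLocalization
      S (Localization S),
    IsLocalizedModule.map_injective _ _ _ _ hf⟩

theorem WithBot.min_one_le_coe_iff {d : WithBot ℕ∞} {e : ℕ∞} :
    min ((1 : ℕ) : WithBot ℕ∞) d ≤ e ↔ (1 ≤ d → 1 ≤ e) := by
  rcases le_or_gt 1 d with hd | hd
  · simp [hd]
  · have hd0 : d ≤ 0 := by
      induction d using WithBot.recBotCoe with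
      | bot => exact bot_le
      | coe d => exact_mod_cast (Order.lt_one_iff.mp (by exact_mod_cast hd)).le
    simp only [hd.not_ge, false_implies, iff_true]
    exact (min_le_right _ _).trans (hd0.trans (by exact_mod_cast zero_le))

theorem serreS'_one_iff {A M : Type} [CommRing A] [AddCommGroup M] [Module A M] :
    SerreS' A M 1 ↔
      ∀ (P : Ideal A) (hP : P.IsPrime), 1 ≤ primeKrullDim A P hP → 1 ≤ primeLocalDepth A P hP M :=
  forall₂_congr fun _ _ => WithBot.min_one_le_coe_iff

theorem one_le_primeLocalDepth_of_injective_pi {B M ω ι : Type} [CommRing B] [AddCommGroup M]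
    [Module B M] [AddCommGroup ω] [Module B ω] [Finite ι] (P : Ideal B) (hP : P.IsPrime)
    {f : M →ₗ[B] ι → ω} (hf : Function.Injective f) (hω : 1 ≤ primeLocalDepth B P hP ω) :
    1 ≤ primeLocalDepth B P hP M := by
  obtain ⟨g, hg⟩ := LocalizedModule.exists_injective_pi P.primeCompl hf
  exact one_le_localDepth_of_injective_pi hg hω

theorem serreS'_one_of_injective_pi {B M ω ι : Type} [CommRing B] [AddCommGroup M] [Module B M]
    [AddCommGroup ω] [Module B ω] [Finite ι] (hω : SerreS' B ω 1) {f : M →ₗ[B] ι → ω}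
    (hf : Function.Injective f) : SerreS' B M 1 := by
  rw [serreS'_one_iff] at hω ⊢
  exact fun P hP hd => one_le_primeLocalDepth_of_injective_pi P hP hf (hω P hP hd)

theorem Module.support_pi_subset {R M ι : Type*} [CommRing R] [AddCommGroup M] [Module R M]
    [Finite ι] : Module.support R (ι → M) ⊆ Module.support R M := by
  classical
  intro p hp
  contrapose hp
  rw [Module.notMem_support_iff'] at hp ⊢
  intro x
  choose r hr hrx using fun i => hp (x i)
  cases nonempty_fintype ι
  refine ⟨∏ i, r i, ?_, funext fun i => ?_⟩
  · exact p.asIdeal.primeCompl.prod_mem fun i _ => hr i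
  · rw [Pi.smul_apply, ← Finset.prod_erase_mul _ _ (Finset.mem_univ i), mul_smul, hrx, smul_zero]
    rfl

theorem Module.Finite.exists_injective_linearMap_pi {R N M : Type*} [CommRing R]
    [AddCommGroup N] [AddCommGroup M] [Module R N] [Module R M] [Module.Finite R N] :
    ∃ (r : ℕ) (g : (N →ₗ[R] M) →ₗ[R] (Fin r → M)), Function.Injective g := by
  obtain ⟨r, s, hs⟩ := Module.Finite.exists_fin (R := R) (M := N)
  refine ⟨r, LinearMap.pi fun i => LinearMap.applyₗ (s i), fun φ ψ h => ?_⟩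
  refine LinearMap.ext_on hs fun x ⟨i, hi⟩ => hi ▸ ?_
  simpa using congrFun h i

theorem serreS'_one_of_embeds_in_canonical_general
    (B : Type) [CommRing B]
    (ω : Type) [AddCommGroup ω] [Module B ω]
    (hω : IsNCanonicalModule B ω 1)
    (M : Type) [AddCommGroup M] [Module B M]
    (hM : ∃ (r : ℕ) (f : M →ₗ[B] (Fin r → ω)), Function.Injective f) :
    (SerreS' B M 1 ∧ Module.support B M ⊆ Module.support B ω) ∧
    (∀ (N : Type) (_ : AddCommGroup N) (_ : Module B N) (_ : Module.Finite B N),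
      ∃ (r : ℕ) (g : (N →ₗ[B] ω) →ₗ[B] (Fin r → ω)), Function.Injective g) := by
  obtain ⟨r, f, hf⟩ := hM
  refine ⟨⟨serreS'_one_of_injective_pi hω.2.1 hf, ?_⟩, fun N _ _ _ => ?_⟩
  · exact (Module.support_subset_of_injective f hf).trans Module.support_pi_subset
  · exact Module.Finite.exists_injective_linearMap_pi

/-- **Submodules of sums of copies of a 1-canonical module (affine case).**
Let `B` be a Noetherian ring (so `Z = Spec B` is affine locally Noetherian)
with a 1-canonical module `ω`, and `(−)^∨ = Hom_B(−, ω)`.  If a finite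
`B`-module `M` is isomorphic to a submodule of a finite direct sum of copies
of `ω`, then `M` satisfies `(S'_1)` and `Supp M ⊆ Supp ω`.  Moreover, for any
finite `B`-module `N`, the dual `N^∨` embeds into a finite direct sum of
copies of `ω`. -/
theorem serreS'_one_of_embeds_in_canonical
    (B : Type) [CommRing B] [IsNoetherianRing B]
    (ω : Type) [AddCommGroup ω] [Module B ω]
    (hω : IsNCanonicalModule B ω 1)
    (M : Type) [AddCommGroup M] [Module B M] [Module.Finite B M]
    (hM : ∃ (r : ℕ) (f : M →ₗ[B] (Fin r → ω)), Function.Injective f) :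
    (SerreS' B M 1 ∧ Module.support B M ⊆ Module.support B ω) ∧
    (∀ (N : Type) (_ : AddCommGroup N) (_ : Module B N) (_ : Module.Finite B N),
      ∃ (r : ℕ) (g : (N →ₗ[B] ω) →ₗ[B] (Fin r → ω)), Function.Injective g) :=
  serreS'_one_of_embeds_in_canonical_general B ω hω M hM
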